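/- Let h_1(x) = x_{12} − 3x_{13} − x_{23} + 8x_{14} + 2x_{24} + 2x_{34} and h_2(x) = 2x_{12} + x_{13} + 5x_{23} − x_{14} − 3x_{24} + x_{34}, and let a_S = 2x_{12}^2 + x_{12}x_{13} + 16x_{12}x_{14} + 5x_{13}x_{14} + 5x_{12}x_{23} + 4x_{12}x_{24} + 32x_{13}x_{24} + 7x_{23}x_{24} − 34x_{12}x_{34} + 2x_{13}x_{34} + 8x_{14}x_{34} + 10x_{23}x_{34} + 2x_{24}x_{34} + 2x_{34}^2. Then the set of real homogeneous quadratic polynomials q in the six variables such that (i) q = α·qq + ℓ_1·h_1 + ℓ_2·h_2 for some α ∈ ℝ and homogeneous linear forms ℓ_1, ℓ_2, and (ii) q vanishes identically on each of the six linear subspaces L_1 = {x_{12} = x_{13} = x_{23} = h_1 = 0}, L_2 = {x_{13} = x_{23} = x_{34} = h_1 = 0}, L_3 = {x_{12} = x_{14} = x_{24} = h_2 = 0}, L_4 = {x_{14} = x_{24} = x_{34} = h_2 = 0}, L_5 = {x_{12} = x_{13} = x_{23} = x_{34} = 0}, L_6 = {x_{12} = x_{14} = x_{24} = x_{34} = 0},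 is exactly the two-dimensional vector space spanned by qq and a_S. -/

import Mathlib

open MvPolynomial

/-- Plücker quadric `x₁₂x₃₄ − x₁₃x₂₄ + x₁₄x₂₃`; coordinates of `ℝ^6` are ordered as
`(x₁₂, x₁₃, x₂₃, x₁₄, x₂₄, x₃₄)`, i.e. indices `0,…,5`. -/
noncomputable def qq6 : MvPolynomial (Fin 6) ℝ := X 0 * X 5 - X 1 * X 4 + X 3 * X 2

/-- `h₁ = x₁₂ − 3x₁₃ − x₂₃ + 8x₁₄ + 2x₂₄ + 2x₃₄`. -/
noncomputable def h16 : MvPolynomial (Fin 6) ℝ :=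
  X 0 - C 3 * X 1 - X 2 + C 8 * X 3 + C 2 * X 4 + C 2 * X 5

/-- `h₂ = 2x₁₂ + x₁₃ + 5x₂₃ − x₁₄ − 3x₂₄ + x₃₄`. -/
noncomputable def h26 : MvPolynomial (Fin 6) ℝ :=
  C 2 * X 0 + X 1 + C 5 * X 2 - X 3 - C 3 * X 4 + X 5

/-- The adjoint `a_S` of Example 5.4. -/
noncomputable def aS6 : MvPolynomial (Fin 6) ℝ :=
  C 2 * X 0 ^ 2 + X 0 * X 1 + C 16 * X 0 * X 3 + C 5 * X 1 * X 3 + C 5 * X 0 * X 2 +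
    C 4 * X 0 * X 4 + C 32 * X 1 * X 4 + C 7 * X 2 * X 4 - C 34 * X 0 * X 5 +
    C 2 * X 1 * X 5 + C 8 * X 3 * X 5 + C 10 * X 2 * X 5 + C 2 * X 4 * X 5 + C 2 * X 5 ^ 2

/-!
Write `q = α • qq + ℓ₁ * h₁ + ℓ₂ * h₂`. The Plücker quadric vanishes on every residual line, so
conditions (ii) are linear conditions on the twelve coefficients of `ℓ₁, ℓ₂` alone. Ten points on
the lines already force `(ℓ₁, ℓ₂)` to be a combination of the cofactors
`(aS6Cofactor₁, aS6Cofactor₂)` of `a_S = -39 • qq + aS6Cofactor₁ * h₁ + aS6Cofactor₂ * h₂` and of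
the Koszul syzygy `(-h₂, h₁)`, which contributes nothing to `q`. Hence `q ∈ span {qq, a_S}`;
conversely `a_S` satisfies (i) by that decomposition and (ii) by direct inspection.
-/

theorem MvPolynomial.IsHomogeneous.exists_sum_smul_X_eq {σ R : Type*} [Fintype σ] [CommSemiring R]
    {p : MvPolynomial σ R} (hp : p.IsHomogeneous 1) : ∃ c : σ → R, ∑ i, c i • X i = p := by
  have hp' : p ∈ homogeneousSubmodule σ R 1 := hp
  rwa [homogeneousSubmodule_one_eq_span_X, Submodule.mem_span_range_iff_exists_fun] at hp'

theorem MvPolynomial.eval_eq_zero_of_mem_span_pair {σ R : Type*} [CommSemiring R]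
    {p₁ p₂ q : MvPolynomial σ R} {x : σ → R} (hq : q ∈ Submodule.span R {p₁, p₂})
    (h₁ : eval x p₁ = 0) (h₂ : eval x p₂ = 0) : eval x q = 0 := by
  obtain ⟨a, b, rfl⟩ := Submodule.mem_span_pair.mp hq
  simp [smul_eval, h₁, h₂]

noncomputable def aS6Cofactor₁ : MvPolynomial (Fin 6) ℝ := C 2 * X 0 + X 1 + C 5 * X 2 + X 5

noncomputable def aS6Cofactor₂ : MvPolynomial (Fin 6) ℝ := C 3 * X 1 + X 2

def VanishesOnResidualLines (q : MvPolynomial (Fin 6) ℝ) : Prop :=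
  (∀ x : Fin 6 → ℝ, x 0 = 0 → x 1 = 0 → x 2 = 0 → eval x h16 = 0 → eval x q = 0) ∧
  (∀ x : Fin 6 → ℝ, x 1 = 0 → x 2 = 0 → x 5 = 0 → eval x h16 = 0 → eval x q = 0) ∧
  (∀ x : Fin 6 → ℝ, x 0 = 0 → x 3 = 0 → x 4 = 0 → eval x h26 = 0 → eval x q = 0) ∧
  (∀ x : Fin 6 → ℝ, x 3 = 0 → x 4 = 0 → x 5 = 0 → eval x h26 = 0 → eval x q = 0) ∧
  (∀ x : Fin 6 → ℝ, x 0 = 0 → x 1 = 0 → x 2 = 0 → x 5 = 0 → eval x q = 0) ∧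
  (∀ x : Fin 6 → ℝ, x 0 = 0 → x 3 = 0 → x 4 = 0 → x 5 = 0 → eval x q = 0)

section Evaluation

variable (x : Fin 6 → ℝ)

@[simp] theorem eval_qq6 : eval x qq6 = x 0 * x 5 - x 1 * x 4 + x 3 * x 2 := by
  simp [qq6]

@[simp] theorem eval_h16 : eval x h16 = x 0 - 3 * x 1 - x 2 + 8 * x 3 + 2 * x 4 + 2 * x 5 := by
  simp [h16]

@[simp] theorem eval_h26 : eval x h26 = 2 * x 0 + x 1 + 5 * x 2 - x 3 - 3 * x 4 + x 5 := by
  simp [h26]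

@[simp] theorem eval_aS6Cofactor₁ : eval x aS6Cofactor₁ = 2 * x 0 + x 1 + 5 * x 2 + x 5 := by
  simp [aS6Cofactor₁]

@[simp] theorem eval_aS6Cofactor₂ : eval x aS6Cofactor₂ = 3 * x 1 + x 2 := by
  simp [aS6Cofactor₂]

@[simp] theorem eval_aS6 : eval x aS6 =
    2 * x 0 ^ 2 + x 0 * x 1 + 16 * x 0 * x 3 + 5 * x 1 * x 3 + 5 * x 0 * x 2 +
    4 * x 0 * x 4 + 32 * x 1 * x 4 + 7 * x 2 * x 4 - 34 * x 0 * x 5 +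
    2 * x 1 * x 5 + 8 * x 3 * x 5 + 10 * x 2 * x 5 + 2 * x 4 * x 5 + 2 * x 5 ^ 2 := by
  simp [aS6]

end Evaluation

theorem aS6_eq : aS6 = C (-39) * qq6 + aS6Cofactor₁ * h16 + aS6Cofactor₂ * h26 :=
  MvPolynomial.funext fun x => by simp; ring

theorem qq6_isHomogeneous : qq6.IsHomogeneous 2 := by
  unfold qq6
  apply_rules [IsHomogeneous.add, IsHomogeneous.sub, IsHomogeneous.mul (m := 1) (n := 1),
    isHomogeneous_X]

theorem h16_isHomogeneous : h16.IsHomogeneous 1 := by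
  unfold h16
  apply_rules [IsHomogeneous.add, IsHomogeneous.sub, isHomogeneous_C_mul_X, isHomogeneous_X]

theorem h26_isHomogeneous : h26.IsHomogeneous 1 := by
  unfold h26
  apply_rules [IsHomogeneous.add, IsHomogeneous.sub, isHomogeneous_C_mul_X, isHomogeneous_X]

theorem aS6Cofactor₁_isHomogeneous : aS6Cofactor₁.IsHomogeneous 1 := by
  unfold aS6Cofactor₁
  apply_rules [IsHomogeneous.add, isHomogeneous_C_mul_X, isHomogeneous_X]

theorem aS6Cofactor₂_isHomogeneous : aS6Cofactor₂.IsHomogeneous 1 := by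
  unfold aS6Cofactor₂
  apply_rules [IsHomogeneous.add, isHomogeneous_C_mul_X, isHomogeneous_X]

theorem aS6_isHomogeneous : aS6.IsHomogeneous 2 := by
  rw [aS6_eq]
  exact ((qq6_isHomogeneous.C_mul _).add (aS6Cofactor₁_isHomogeneous.mul h16_isHomogeneous)).add
    (aS6Cofactor₂_isHomogeneous.mul h26_isHomogeneous)

theorem vanishesOnResidualLines_of_mem_span {q : MvPolynomial (Fin 6) ℝ}
    (hq : q ∈ Submodule.span ℝ {qq6, aS6}) : VanishesOnResidualLines q := by
  refine ⟨fun x h₀ h₁ h₂ h => ?_, fun x h₁ h₂ h₅ h => ?_, fun x h₀ h₃ h₄ h => ?_,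
    fun x h₃ h₄ h₅ h => ?_, fun x h₀ h₁ h₂ h₅ => ?_, fun x h₀ h₃ h₄ h₅ => ?_⟩ <;>
  refine eval_eq_zero_of_mem_span_pair hq (by simp [*]) ?_ <;>
  simp only [eval_aS6, eval_h16, eval_h26, *] at *
  · linear_combination x 5 * h
  · linear_combination 2 * x 0 * h
  · linear_combination 2 * x 5 * h
  · linear_combination x 0 * h
  · ring
  · ring

theorem exists_eq_aS6Cofactors_of_vanishesOnResidualLines {α : ℝ} {ℓ₁ ℓ₂ : MvPolynomial (Fin 6) ℝ}
    (hℓ₁ : ℓ₁.IsHomogeneous 1) (hℓ₂ : ℓ₂.IsHomogeneous 1)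
    (hL : VanishesOnResidualLines (C α * qq6 + ℓ₁ * h16 + ℓ₂ * h26)) :
    ∃ u v : ℝ, ℓ₁ = C u * aS6Cofactor₁ - C v * h26 ∧ ℓ₂ = C u * aS6Cofactor₂ + C v * h16 := by
  obtain ⟨a, rfl⟩ := hℓ₁.exists_sum_smul_X_eq
  obtain ⟨b, rfl⟩ := hℓ₂.exists_sum_smul_X_eq
  obtain ⟨hL₁, hL₂, hL₃, hL₄, hL₅, hL₆⟩ := hL
  have e₁ := hL₁ ![0, 0, 0, 1, -4, 0] rfl rfl rfl (by simp; norm_num)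
  have e₂ := hL₁ ![0, 0, 0, 0, 1, -1] rfl rfl rfl (by simp)
  have e₃ := hL₂ ![-8, 0, 0, 1, 0, 0] rfl rfl rfl (by simp)
  have e₄ := hL₃ ![0, -5, 1, 0, 0, 0] rfl rfl rfl (by simp)
  have e₅ := hL₃ ![0, -1, 0, 0, 0, 1] rfl rfl rfl (by simp)
  have e₆ := hL₄ ![1, -2, 0, 0, 0, 0] rfl rfl rfl (by simp)
  have e₇ := hL₅ ![0, 0, 0, 1, 0, 0] rfl rfl rfl rfl
  have e₈ := hL₅ ![0, 0, 0, 0, 1, 0] rfl rfl rfl rfl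
  have e₉ := hL₆ ![0, 1, 0, 0, 0, 0] rfl rfl rfl rfl
  have e₁₀ := hL₆ ![0, 0, 1, 0, 0, 0] rfl rfl rfl rfl
  simp only [map_add, map_mul, eval_C, eval_qq6, eval_h16, eval_h26, smul_eval, eval_X,
    Fin.sum_univ_six, Matrix.cons_val, Matrix.cons_val_zero, Matrix.cons_val_one, Fin.isValue]
    at e₁ e₂ e₃ e₄ e₅ e₆ e₇ e₈ e₉ e₁₀
  have ha : a 0 = 2 * a 1 ∧ a 2 = 5 * a 1 ∧ a 3 = b 5 / 2 ∧ a 4 = 3 * b 5 / 2 ∧ a 5 = a 1 := by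
    refine ⟨?_, ?_, ?_, ?_, ?_⟩ <;> linarith
  have hb : b 0 = b 5 / 2 ∧ b 1 = 3 * a 1 ∧ b 2 = a 1 ∧ b 3 = 4 * b 5 ∧ b 4 = b 5 := by
    refine ⟨?_, ?_, ?_, ?_, ?_⟩ <;> linarith
  refine ⟨a 1 + b 5 / 2, b 5 / 2, MvPolynomial.funext fun x => ?_, MvPolynomial.funext fun x => ?_⟩
  · simp only [Fin.sum_univ_six, ha, map_add, map_sub, map_mul, smul_eval, eval_X, eval_C,
      eval_aS6Cofactor₁, eval_h26]
    ring
  · simp only [Fin.sum_univ_six, hb, map_add, map_mul, smul_eval, eval_X, eval_C,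
      eval_aS6Cofactor₂, eval_h16]
    ring

theorem mem_span_of_vanishesOnResidualLines {α : ℝ} {ℓ₁ ℓ₂ : MvPolynomial (Fin 6) ℝ}
    (hℓ₁ : ℓ₁.IsHomogeneous 1) (hℓ₂ : ℓ₂.IsHomogeneous 1)
    (hL : VanishesOnResidualLines (C α * qq6 + ℓ₁ * h16 + ℓ₂ * h26)) :
    C α * qq6 + ℓ₁ * h16 + ℓ₂ * h26 ∈ Submodule.span ℝ {qq6, aS6} := by
  obtain ⟨u, v, rfl, rfl⟩ := exists_eq_aS6Cofactors_of_vanishesOnResidualLines hℓ₁ hℓ₂ hL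
  refine Submodule.mem_span_pair.mpr ⟨α + 39 * u, u, MvPolynomial.funext fun x => ?_⟩
  simp only [map_add, map_sub, map_mul, smul_eval, eval_C, eval_qq6, eval_aS6, eval_h16, eval_h26,
    eval_aS6Cofactor₁, eval_aS6Cofactor₂]
  ring

theorem linearIndependent_qq6_aS6 : LinearIndependent ℝ ![qq6, aS6] := by
  rw [LinearIndependent.pair_iff]
  intro s t h
  have h₁ := congrArg (eval ![1, 0, 0, 0, 0, 0]) h
  have h₂ := congrArg (eval ![1, 0, 0, 0, 0, 1]) h
  simp only [map_add, smul_eval, eval_qq6, eval_aS6, Matrix.cons_val, Matrix.cons_val_zero,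
    Matrix.cons_val_one, Fin.isValue, map_zero] at h₁ h₂
  constructor <;> linarith

theorem stmt6 :
    {q : MvPolynomial (Fin 6) ℝ |
        q.IsHomogeneous 2 ∧
        (∃ (α : ℝ) (ℓ₁ ℓ₂ : MvPolynomial (Fin 6) ℝ), ℓ₁.IsHomogeneous 1 ∧ ℓ₂.IsHomogeneous 1 ∧
          q = C α * qq6 + ℓ₁ * h16 + ℓ₂ * h26) ∧
        (∀ x : Fin 6 → ℝ, x 0 = 0 → x 1 = 0 → x 2 = 0 → eval x h16 = 0 → eval x q = 0) ∧
        (∀ x : Fin 6 → ℝ, x 1 = 0 → x 2 = 0 → x 5 = 0 → eval x h16 = 0 → eval x q = 0) ∧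
        (∀ x : Fin 6 → ℝ, x 0 = 0 → x 3 = 0 → x 4 = 0 → eval x h26 = 0 → eval x q = 0) ∧
        (∀ x : Fin 6 → ℝ, x 3 = 0 → x 4 = 0 → x 5 = 0 → eval x h26 = 0 → eval x q = 0) ∧
        (∀ x : Fin 6 → ℝ, x 0 = 0 → x 1 = 0 → x 2 = 0 → x 5 = 0 → eval x q = 0) ∧
        (∀ x : Fin 6 → ℝ, x 0 = 0 → x 3 = 0 → x 4 = 0 → x 5 = 0 → eval x q = 0)} =
      ↑(Submodule.span ℝ {qq6, aS6}) ∧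
    LinearIndependent ℝ ![qq6, aS6] := by
  refine ⟨Set.ext fun q => ⟨?_, fun hq => ?_⟩, linearIndependent_qq6_aS6⟩
  · rintro ⟨-, ⟨α, ℓ₁, ℓ₂, hℓ₁, hℓ₂, rfl⟩, hL⟩
    exact mem_span_of_vanishesOnResidualLines hℓ₁ hℓ₂ hL
  obtain ⟨a, b, rfl⟩ := Submodule.mem_span_pair.mp hq
  refine ⟨?_, ⟨a - 39 * b, C b * aS6Cofactor₁, C b * aS6Cofactor₂,
    aS6Cofactor₁_isHomogeneous.C_mul b, aS6Cofactor₂_isHomogeneous.C_mul b, ?_⟩,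
    vanishesOnResidualLines_of_mem_span hq⟩
  · rw [smul_eq_C_mul, smul_eq_C_mul]
    exact (qq6_isHomogeneous.C_mul a).add (aS6_isHomogeneous.C_mul b)
  · simp only [aS6_eq, smul_eq_C_mul, map_sub, map_mul, map_neg]
    ring
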